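/- Let G be a bipartite C4-free graph with minimum degree δ(G) ≥ d/2, and let v be a vertex with a set S1 ⊆ N(v) of size d/2. Then one can choose, for each u ∈ S1, a set of d/4 − 1 neighbors of u outside S1 ∪ {v}, and all these chosen vertices are pairwise distinct across different u ∈ S1; consequently there is a set S2' of exactly (d/2)(d/4 − 1) vertices at distance 2 from v. -/

import Mathlib

open Finset
open scoped Classical

/-- A graph is `C₄`-free: there is no 4-cycle, equivalently any closed walk
`a b c d a` of length 4 is degenerate. -/
def C4Free {V : Type*} (G : SimpleGraph V) : Prop :=
  ∀ a b c d : V, G.Adj a b → G.Adj b c → G.Adj c d → G.Adj d a → a = c ∨ b = d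

/-!
The sets `N(u) \ (S₁ ∪ {v})`, `u ∈ S₁`, are pairwise disjoint, since a common element `w` would
close the 4-cycle `v u w u'`. Bipartiteness rules out triangles, so each of these sets is
`N(u) \ {v}`, of size at least `d/2 - 1 ≥ d/4 - 1`, and each of its elements is a non-neighbour
of `v` joined to `v` through `u`, i.e. at distance exactly 2. Choosing `d/4 - 1` elements in
each set and taking the union gives `S₂'`.
-/

namespace SimpleGraph

variable {V : Type*} {G : SimpleGraph V}

lemma not_adj_of_adj_of_adj_of_bipartition {A : Set V}
    (hA : ∀ u w : V, G.Adj u w → (u ∈ A ↔ w ∉ A)) {x y z : V}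
    (hxy : G.Adj x y) (hyz : G.Adj y z) : ¬ G.Adj x z := fun hxz => by
  have := hA x y hxy; have := hA y z hyz; have := hA x z hxz
  tauto

lemma dist_eq_two_of_adj_of_adj {u v w : V} (hvu : G.Adj v u) (huw : G.Adj u w)
    (hvw : ¬ G.Adj v w) (hne : v ≠ w) : G.dist v w = 2 := by
  have hedist : G.edist v w = 2 :=
    edist_eq_two_iff.mpr ⟨hne, hvw, u, (mem_commonNeighbors G).mpr ⟨hvu, huw.symm⟩⟩
  rw [dist, hedist]
  rfl

lemma card_neighborFinset_sdiff_insert [Fintype V] [DecidableEq V] [DecidableRel G.Adj]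
    {u v : V} {S : Finset V} (huv : G.Adj u v) (hS : ∀ w ∈ S, ¬ G.Adj u w) :
    (G.neighborFinset u \ insert v S).card = G.degree u - 1 := by
  have heq : G.neighborFinset u \ insert v S = (G.neighborFinset u).erase v := by
    ext w
    simp only [mem_sdiff, mem_insert, mem_erase, mem_neighborFinset]
    constructor
    · rintro ⟨hw, hwvS⟩
      exact ⟨fun h => hwvS (Or.inl h), hw⟩
    · rintro ⟨hwv, hw⟩
      exact ⟨hw, fun h => h.elim hwv fun hwS => hS w hwS hw⟩
  rw [heq, card_erase_of_mem ((mem_neighborFinset G u v).mpr huv), card_neighborFinset_eq_degree]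

end SimpleGraph

lemma C4Free.eq_of_adj_of_adj {V : Type*} {G : SimpleGraph V} (hG : C4Free G)
    {v u u' w : V} (hvu : G.Adj v u) (hvu' : G.Adj v u') (huw : G.Adj u w) (hu'w : G.Adj u' w)
    (hwv : w ≠ v) : u = u' :=
  (hG v u w u' hvu huw hu'w.symm hvu'.symm).resolve_left (Ne.symm hwv)

open SimpleGraph in
theorem second_sphere_selection_general {V : Type*} [Fintype V] [DecidableEq V]
    (G : SimpleGraph V) [DecidableRel G.Adj] (hG : C4Free G)
    (hbip : ∃ A : Set V, ∀ u w : V, G.Adj u w → (u ∈ A ↔ w ∉ A))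
    (d : ℕ)
    (hmin : ∀ x : V, d / 2 ≤ G.degree x)
    (v : V) (S1 : Finset V) (hS1 : S1 ⊆ G.neighborFinset v) (hcard : S1.card = d / 2) :
    ∃ f : V → Finset V,
      (∀ u ∈ S1, f u ⊆ G.neighborFinset u \ insert v S1 ∧ (f u).card = d / 4 - 1) ∧
      (∀ u ∈ S1, ∀ u' ∈ S1, u ≠ u' → Disjoint (f u) (f u')) ∧
      ∃ S2' : Finset V, S2'.card = (d / 2) * (d / 4 - 1) ∧ ∀ w ∈ S2', G.dist v w = 2 := by
  obtain ⟨A, hA⟩ := hbip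
  have hadj : ∀ u ∈ S1, G.Adj v u := fun u hu => (mem_neighborFinset G v u).mp (hS1 hu)
  have hcandidates : ∀ u ∈ S1, d / 4 - 1 ≤ (G.neighborFinset u \ insert v S1).card := by
    intro u hu
    rw [card_neighborFinset_sdiff_insert (hadj u hu).symm fun w hw =>
      not_adj_of_adj_of_adj_of_bipartition hA (hadj u hu).symm (hadj w hw)]
    have := hmin u
    omega
  choose! f hfsub hfcard using fun u hu => exists_subset_card_eq (hcandidates u hu)
  have hfadj : ∀ u ∈ S1, ∀ w ∈ f u, G.Adj u w ∧ w ≠ v := fun u hu w hw => by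
    have := mem_sdiff.mp (hfsub u hu hw)
    exact ⟨(mem_neighborFinset G u w).mp this.1, fun h => this.2 (h ▸ mem_insert_self v S1)⟩
  have hdisj : (S1 : Set V).PairwiseDisjoint f := fun u hu u' hu' hne =>
    disjoint_left.mpr fun w hw hw' =>
      hne (hG.eq_of_adj_of_adj (hadj u hu) (hadj u' hu') (hfadj u hu w hw).1
        (hfadj u' hu' w hw').1 (hfadj u hu w hw).2)
  refine ⟨f, fun u hu => ⟨hfsub u hu, hfcard u hu⟩, fun u hu u' hu' => hdisj hu hu',
    S1.biUnion f, ?_, ?_⟩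
  · rw [card_biUnion hdisj, sum_congr rfl hfcard, sum_const, smul_eq_mul, hcard]
  · simp only [mem_biUnion]
    rintro w ⟨u, hu, hw⟩
    obtain ⟨huw, hwv⟩ := hfadj u hu w hw
    exact dist_eq_two_of_adj_of_adj (hadj u hu) huw
      (not_adj_of_adj_of_adj_of_bipartition hA (hadj u hu) huw) (Ne.symm hwv)

/-- In a bipartite `C₄`-free graph with minimum degree at least `d/2`, given a
vertex `v` and a set `S₁ ⊆ N(v)` of size `d/2`, one may pick for each `u ∈ S₁`
a set of `d/4 − 1` neighbors of `u` avoiding `S₁ ∪ {v}`, pairwise disjoint over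
distinct `u`; consequently there is a set `S₂'` of exactly `(d/2)(d/4 − 1)`
vertices at distance 2 from `v`. -/
theorem second_sphere_selection {V : Type*} [Fintype V] [DecidableEq V]
    (G : SimpleGraph V) [DecidableRel G.Adj] (hG : C4Free G)
    (hbip : ∃ A : Set V, ∀ u w : V, G.Adj u w → (u ∈ A ↔ w ∉ A))
    (d : ℕ) (hd8 : 8 ≤ d) (hd4 : 4 ∣ d)
    (hmin : ∀ x : V, d / 2 ≤ G.degree x)
    (v : V) (S1 : Finset V) (hS1 : S1 ⊆ G.neighborFinset v) (hcard : S1.card = d / 2) :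
    ∃ f : V → Finset V,
      (∀ u ∈ S1, f u ⊆ G.neighborFinset u \ insert v S1 ∧ (f u).card = d / 4 - 1) ∧
      (∀ u ∈ S1, ∀ u' ∈ S1, u ≠ u' → Disjoint (f u) (f u')) ∧
      ∃ S2' : Finset V, S2'.card = (d / 2) * (d / 4 - 1) ∧ ∀ w ∈ S2', G.dist v w = 2 :=
  second_sphere_selection_general G hG hbip d hmin v S1 hS1 hcard
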